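/- arXiv:1302.3345 — 2 statements merged into one kernel-verified Lean document; each statement's English description precedes it below -/
import Mathlib

section
/- (Corollary 3) Let L be a finite-dimensional nilpotent left Leibniz algebra over a field k of characteristic 0 such that the commutant [L,L] has codimension 1 in L. Then L is generated by a single element: there exists a ∈ L such that the smallest subalgebra of L containing a equals L. -/
/-!
Pick `a` spanning `L` modulo the commutant `C¹ = [L, L]`, and let `S` be a subalgebra
containing `a`, so that `S + C¹ = L`. Since `[Cᵃ, Cᵇ] ⊆ Cᵃ⁺ᵇ⁺¹` for the lower central series,
expanding `[x, c]` with `x ∈ S + C¹` and `c ∈ Cⁿ ⊆ S + Cⁿ⁺¹` shows inductively that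
`Cⁿ ⊆ S + Cⁿ⁺¹`, hence `S + Cⁿ = L` for every `n`. Nilpotency makes some `Cⁿ` vanish, so `S = L`.
-/

section LeibnizDefs

variable {k : Type*} [Field k] {M : Type*} [AddCommGroup M] [Module k M]

/-- `[A, B]`: the linear span of brackets of elements of two subspaces. -/
def bracketSpan (β : M →ₗ[k] M →ₗ[k] M) (A B : Submodule k M) : Submodule k M :=
  Submodule.span k {z : M | ∃ a ∈ A, ∃ b ∈ B, z = β a b}

/-- Derived series of a subspace `I`: `D^0 = I`, `D^{n+1} = [D^n, D^n]`. -/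
def derivedSeriesOf (β : M →ₗ[k] M →ₗ[k] M) (I : Submodule k M) : ℕ → Submodule k M
  | 0 => I
  | n + 1 => bracketSpan β (derivedSeriesOf β I n) (derivedSeriesOf β I n)

/-- Lower central series of a subspace `I`: `C^0 = I`, `C^{n+1} = [I, C^n]`. -/
def lowerCentralSeriesOf (β : M →ₗ[k] M →ₗ[k] M) (I : Submodule k M) : ℕ → Submodule k M
  | 0 => I
  | n + 1 => bracketSpan β I (lowerCentralSeriesOf β I n)

/-- A two-sided ideal. -/
def LeibnizIdeal (β : M →ₗ[k] M →ₗ[k] M) (I : Submodule k M) : Prop :=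
  (∀ x : M, ∀ u ∈ I, β x u ∈ I) ∧ (∀ u ∈ I, ∀ x : M, β u x ∈ I)

/-- A subspace is solvable if its derived series reaches `0`. -/
def LeibnizSolvable (β : M →ₗ[k] M →ₗ[k] M) (I : Submodule k M) : Prop :=
  ∃ n, derivedSeriesOf β I n = ⊥

/-- A subspace is nilpotent if its lower central series reaches `0`. -/
def LeibnizNilpotent (β : M →ₗ[k] M →ₗ[k] M) (I : Submodule k M) : Prop :=
  ∃ n, lowerCentralSeriesOf β I n = ⊥

/-- A subalgebra: a subspace closed under the bracket. -/
def LeibnizSubalgebra (β : M →ₗ[k] M →ₗ[k] M) (S : Submodule k M) : Prop :=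
  ∀ u ∈ S, ∀ v ∈ S, β u v ∈ S

end LeibnizDefs

theorem Submodule.exists_span_singleton_sup_eq_top_of_finrank_quotient_eq_one
    {k M : Type*} [Field k] [AddCommGroup M] [Module k M] {p : Submodule k M}
    (h : Module.finrank k (M ⧸ p) = 1) : ∃ a : M, k ∙ a ⊔ p = ⊤ := by
  obtain ⟨v, -, hv⟩ := finrank_eq_one_iff'.1 h
  obtain ⟨a, rfl⟩ := p.mkQ_surjective v
  refine ⟨a, ?_⟩
  rw [sup_comm, ← comap_map_mkQ, map_span, Set.image_singleton,
    (span_singleton_eq_top_iff _ _).2 hv, comap_top]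

section LowerCentralSeries

variable {k : Type*} [Field k] {M : Type*} [AddCommGroup M] [Module k M]
  (β : M →ₗ[k] M →ₗ[k] M)

theorem apply_mem_bracketSpan {A B : Submodule k M} {u v : M} (hu : u ∈ A) (hv : v ∈ B) :
    β u v ∈ bracketSpan β A B :=
  Submodule.subset_span ⟨u, hu, v, hv, rfl⟩

theorem apply_mem_of_mem_span_left {s : Set M} {B N : Submodule k M}
    (h : ∀ x ∈ s, ∀ b ∈ B, β x b ∈ N) {u b : M} (hu : u ∈ Submodule.span k s) (hb : b ∈ B) :
    β u b ∈ N :=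
  (Submodule.span_le (p := N.comap (β.flip b)) |>.2 fun x hx => h x hx b hb) hu

theorem apply_mem_lowerCentralSeriesOf_top
    (leib : ∀ x y z : M, β x (β y z) = β (β x y) z + β y (β x z)) (a : ℕ) :
    ∀ b : ℕ, ∀ u ∈ lowerCentralSeriesOf β ⊤ a, ∀ v ∈ lowerCentralSeriesOf β ⊤ b,
      β u v ∈ lowerCentralSeriesOf β ⊤ (a + b + 1) := by
  induction a with
  | zero =>
    intro b u _ v hv
    rw [Nat.zero_add]
    exact apply_mem_bracketSpan β Submodule.mem_top hv
  | succ a ih =>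
    intro b u hu v hv
    refine apply_mem_of_mem_span_left β ?_ hu hv
    rintro _ ⟨x, -, c, hc, rfl⟩ w hw
    -- `[[x, c], w] = [x, [c, w]] - [c, [x, w]]`
    rw [eq_sub_of_add_eq (leib x c w).symm]
    refine Submodule.sub_mem _ ?_ ?_
    · rw [show a + 1 + b + 1 = a + b + 1 + 1 by omega]
      exact apply_mem_bracketSpan β Submodule.mem_top (ih b c hc w hw)
    · rw [show a + 1 + b + 1 = a + (b + 1) + 1 by omega]
      exact ih (b + 1) c hc _ (apply_mem_bracketSpan β Submodule.mem_top hw)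

variable {β}

theorem lowerCentralSeriesOf_top_le_sup_succ
    (leib : ∀ x y z : M, β x (β y z) = β (β x y) z + β y (β x z))
    {S : Submodule k M} (hS : LeibnizSubalgebra β S)
    (hS1 : S ⊔ bracketSpan β ⊤ ⊤ = ⊤) (n : ℕ) :
    lowerCentralSeriesOf β ⊤ n ≤ S ⊔ lowerCentralSeriesOf β ⊤ (n + 1) := by
  induction n with
  | zero => exact hS1.ge
  | succ n ih =>
    refine Submodule.span_le.2 ?_
    rintro _ ⟨x, -, c, hc, rfl⟩
    obtain ⟨s, hs, u, hu, rfl⟩ := Submodule.mem_sup.1 (hS1.ge (Submodule.mem_top (x := x)))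
    rw [map_add, LinearMap.add_apply]
    refine Submodule.add_mem _ ?_ ?_
    · obtain ⟨s', hs', u', hu', rfl⟩ := Submodule.mem_sup.1 (ih hc)
      rw [map_add]
      refine Submodule.add_mem _ (Submodule.mem_sup_left (hS s hs s' hs')) ?_
      exact Submodule.mem_sup_right (apply_mem_bracketSpan β Submodule.mem_top hu')
    · refine Submodule.mem_sup_right ?_
      rw [show n + 1 + 1 = 1 + n + 1 by omega]
      exact apply_mem_lowerCentralSeriesOf_top β leib 1 n u hu c hc

theorem LeibnizSubalgebra.eq_top_of_sup_bracketSpan_eq_top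
    (leib : ∀ x y z : M, β x (β y z) = β (β x y) z + β y (β x z))
    (hnil : LeibnizNilpotent β ⊤) {S : Submodule k M} (hS : LeibnizSubalgebra β S)
    (hS1 : S ⊔ bracketSpan β ⊤ ⊤ = ⊤) : S = ⊤ := by
  have hsup : ∀ n, S ⊔ lowerCentralSeriesOf β ⊤ n = ⊤ := by
    intro n
    induction n with
    | zero => exact top_le_iff.1 le_sup_right
    | succ n ih =>
      exact eq_top_iff.2 <| ih.ge.trans <|
        sup_le le_sup_left (lowerCentralSeriesOf_top_le_sup_succ leib hS hS1 n)
  obtain ⟨N, hN⟩ := hnil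
  simpa only [hN, sup_bot_eq] using hsup N

end LowerCentralSeries

theorem stmt_10_general {k : Type*} [Field k] {L : Type*} [AddCommGroup L] [Module k L]
    (β : L →ₗ[k] L →ₗ[k] L)
    (leib : ∀ x y z : L, β x (β y z) = β (β x y) z + β y (β x z))
    (hnil : LeibnizNilpotent β (⊤ : Submodule k L))
    (hcodim : Module.finrank k (L ⧸ bracketSpan β ⊤ ⊤) = 1) :
    ∃ a : L, ∀ S : Submodule k L, LeibnizSubalgebra β S → a ∈ S → S = ⊤ := by
  obtain ⟨a, ha⟩ := Submodule.exists_span_singleton_sup_eq_top_of_finrank_quotient_eq_one hcodim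
  refine ⟨a, fun S hS haS => hS.eq_top_of_sup_bracketSpan_eq_top leib hnil ?_⟩
  exact eq_top_iff.2 <| ha.ge.trans <|
    sup_le_sup_right ((Submodule.span_singleton_le_iff_mem a S).2 haS) _

/-- A nilpotent Leibniz algebra whose commutant has codimension 1 is generated by one
element. -/
theorem stmt_10 {k : Type*} [Field k] [CharZero k] {L : Type*} [AddCommGroup L] [Module k L]
    [FiniteDimensional k L] (β : L →ₗ[k] L →ₗ[k] L)
    (leib : ∀ x y z : L, β x (β y z) = β (β x y) z + β y (β x z))
    (hnil : LeibnizNilpotent β (⊤ : Submodule k L))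
    (hcodim : Module.finrank k (L ⧸ bracketSpan β ⊤ ⊤) = 1) :
    ∃ a : L, ∀ S : Submodule k L, LeibnizSubalgebra β S → a ∈ S → S = ⊤ :=
  stmt_10_general β leib hnil hcodim
end

section
/- (Proposition 3, weak Lie theorem) Let L be a finite-dimensional solvable left Leibniz algebra over the field ℂ, with dim L = n. Then there exists a complete flag of subspaces V_0 = {0} ⊂ V_1 ⊂ ⋯ ⊂ V_n = L with dim V_k = k such that [x, V_k] ⊆ V_k for every x ∈ L and every k; equivalently, all left multiplication operators l_x can be simultaneously put in upper-triangular form. -/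
/-!
The left Leibniz identity says exactly that `x ↦ β x` turns brackets into commutators,
`β (β x y) = ⁅β x, β y⁆`. Hence the operators `β x` form a Lie subalgebra `g` of `End L`
which is a bracket-preserving image of `L`, so `g` is solvable, and the `g`-submodules of `L`
are the subspaces invariant under all left multiplications. By Lie's theorem every nonzero
quotient of `L` by a `g`-submodule `N` has a common eigenvector; adjoining a lift of it
enlarges `N` by one dimension, and iterating this from `⊥` gives the flag.
-/

open Module

attribute [local instance] LieRing.ofAssociativeRing

section LeftMultiplication

variable {k M : Type*} [Field k] [AddCommGroup M] [Module k M] {β : M →ₗ[k] M →ₗ[k] M}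

lemma mem_bracketSpan {A B : Submodule k M} {a b : M} (ha : a ∈ A) (hb : b ∈ B) :
    β a b ∈ bracketSpan β A B :=
  Submodule.subset_span ⟨a, ha, b, hb, rfl⟩

lemma leftMul_bracket (leib : ∀ x y z : M, β x (β y z) = β (β x y) z + β y (β x z))
    (x y : M) : β (β x y) = ⁅β x, β y⁆ := by
  ext z
  simp [LieRing.of_associative_ring_bracket, leib x y z]

variable (β) in
def leftMulLieSubalgebra (leib : ∀ x y z : M, β x (β y z) = β (β x y) z + β y (β x z)) :
    LieSubalgebra k (Module.End k M) where
  toSubmodule := LinearMap.range β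
  lie_mem' := by
    rintro _ _ ⟨x, rfl⟩ ⟨y, rfl⟩
    exact ⟨β x y, leftMul_bracket leib x y⟩

variable {L : Type*} [LieRing L] [LieAlgebra k L] {φ : M →ₗ[k] L}

lemma derivedSeries_le_map_derivedSeriesOf (hφ : Function.Surjective φ)
    (hβ : ∀ x y, φ (β x y) = ⁅φ x, φ y⁆) (i : ℕ) :
    (LieAlgebra.derivedSeries k L i).toSubmodule ≤ (derivedSeriesOf β ⊤ i).map φ := by
  induction i with
  | zero => simp [derivedSeriesOf, LinearMap.range_eq_top.mpr hφ]
  | succ i ih =>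
    rw [LieAlgebra.derivedSeries_def, LieAlgebra.derivedSeriesOfIdeal_succ,
      LieSubmodule.lieIdeal_oper_eq_linear_span', Submodule.span_le]
    rintro _ ⟨a, ha, b, hb, rfl⟩
    obtain ⟨a', ha', rfl⟩ := ih ha
    obtain ⟨b', hb', rfl⟩ := ih hb
    exact ⟨β a' b', mem_bracketSpan ha' hb', hβ a' b'⟩

lemma LeibnizSolvable.isSolvable_of_surjective (hsolv : LeibnizSolvable β ⊤)
    (hφ : Function.Surjective φ) (hβ : ∀ x y, φ (β x y) = ⁅φ x, φ y⁆) :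
    LieAlgebra.IsSolvable L := by
  obtain ⟨i, hi⟩ := hsolv
  refine LieAlgebra.IsSolvable.mk (R := k) (k := i) ?_
  rw [← LieSubmodule.toSubmodule_eq_bot, eq_bot_iff]
  simpa [hi] using derivedSeries_le_map_derivedSeriesOf hφ hβ i

end LeftMultiplication

namespace LieModule

variable {k L V : Type*} [Field k] [IsAlgClosed k] [CharZero k]
  [LieRing L] [LieAlgebra k L] [LieAlgebra.IsSolvable L]
  [AddCommGroup V] [Module k V] [FiniteDimensional k V] [LieRingModule L V] [LieModule k L V]

theorem exists_le_finrank_eq_add_one {N : LieSubmodule k L V} (hN : N ≠ ⊤) :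
    ∃ N' : LieSubmodule k L V, N ≤ N' ∧ finrank k N' = finrank k N + 1 := by
  have : Nontrivial (V ⧸ N) :=
    Submodule.Quotient.nontrivial_iff.mpr (by rwa [ne_eq, LieSubmodule.toSubmodule_eq_top])
  obtain ⟨χ, hχ⟩ := exists_nontrivial_weightSpace_of_isSolvable k L (V ⧸ N)
  obtain ⟨⟨w, hwχ⟩, hw0⟩ := exists_ne (0 : weightSpace (V ⧸ N) χ)
  obtain ⟨v, rfl⟩ := LieSubmodule.Quotient.surjective_mk' N w
  have hvN : v ∉ N := by simpa [LieSubmodule.Quotient.mk_eq_zero] using hw0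
  have hbracket : ∀ x : L, ⁅x, v⁆ - χ x • v ∈ N := fun x => by
    rw [← LieSubmodule.Quotient.mk_eq_zero, map_sub, LieModuleHom.map_lie, map_smul,
      (mem_weightSpace _ _).mp hwχ x, sub_self]
  let N' : LieSubmodule k L V :=
    { toSubmodule := N.toSubmodule ⊔ Submodule.span k {v}
      lie_mem := fun {x u} hu => by
        obtain ⟨n, hn, s, hs, rfl⟩ := Submodule.mem_sup.mp hu
        obtain ⟨t, rfl⟩ := Submodule.mem_span_singleton.mp hs
        have : ⁅x, n + t • v⁆ = (⁅x, n⁆ + t • (⁅x, v⁆ - χ x • v)) + (t * χ x) • v := by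
          rw [lie_add, lie_smul, smul_sub, smul_smul]; abel
        rw [this]
        exact Submodule.add_mem_sup (N.add_mem (N.lie_mem hn) (N.smul_mem t (hbracket x)))
          (Submodule.smul_mem _ _ (Submodule.mem_span_singleton_self v)) }
  exact ⟨N', le_sup_left (a := N.toSubmodule), Submodule.finrank_sup_span_singleton hvN⟩

theorem exists_lieSubmodule_flag (n : ℕ) (hn : finrank k V = n) :
    ∃ F : Fin (n + 1) → LieSubmodule k L V, Monotone F ∧ F 0 = ⊥ ∧ F (Fin.last n) = ⊤ ∧
      ∀ i, finrank k (F i) = i := by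
  have hcover : ∀ N : LieSubmodule k L V,
      ∃ N', N ≤ N' ∧ (N ≠ ⊤ → finrank k N' = finrank k N + 1) := fun N => by
    by_cases hN : N = ⊤
    · exact ⟨N, le_rfl, fun h => (h hN).elim⟩
    · obtain ⟨N', hle, hrank⟩ := exists_le_finrank_eq_add_one hN
      exact ⟨N', hle, fun _ => hrank⟩
  choose cover le_cover finrank_cover using hcover
  have hmono : Monotone fun i : ℕ => cover^[i] ⊥ := monotone_nat_of_le_succ fun i => by
    simpa only [Function.iterate_succ_apply'] using le_cover _
  have hrank : ∀ i ≤ n, finrank k (cover^[i] ⊥) = i := by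
    intro i hi
    induction i with
    | zero => exact finrank_bot k V
    | succ i ih =>
      have hi' := ih (by omega)
      have hne : cover^[i] ⊥ ≠ ⊤ := fun h => by
        have : finrank k V = i := by rw [← hi', h]; exact (finrank_top k V).symm
        omega
      rw [Function.iterate_succ_apply', finrank_cover _ hne, hi']
  refine ⟨fun i => cover^[i] ⊥, hmono.comp Fin.val_strictMono.monotone, rfl, ?_,
    fun i => hrank i (Nat.lt_succ_iff.mp i.isLt)⟩
  exact (LieSubmodule.toSubmodule_eq_top _).mp
    (Submodule.eq_top_of_finrank_eq ((hrank n le_rfl).trans hn.symm))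

end LieModule

/-- Weak Lie theorem: a solvable complex Leibniz algebra has a complete flag invariant
under all left multiplications. -/
theorem stmt_12 {L : Type*} [AddCommGroup L] [Module ℂ L] [FiniteDimensional ℂ L]
    (β : L →ₗ[ℂ] L →ₗ[ℂ] L)
    (leib : ∀ x y z : L, β x (β y z) = β (β x y) z + β y (β x z))
    (hsolv : LeibnizSolvable β (⊤ : Submodule ℂ L))
    (n : ℕ) (hn : Module.finrank ℂ L = n) :
    ∃ V : Fin (n + 1) → Submodule ℂ L,
      Monotone V ∧ V 0 = ⊥ ∧ V (Fin.last n) = ⊤ ∧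
      (∀ i : Fin (n + 1), Module.finrank ℂ (V i) = (i : ℕ)) ∧
      (∀ i : Fin (n + 1), ∀ x : L, ∀ v ∈ V i, β x v ∈ V i) := by
  let g := leftMulLieSubalgebra β leib
  let φ : L →ₗ[ℂ] g := β.codRestrict g.toSubmodule fun x => ⟨x, rfl⟩
  have hφ : Function.Surjective φ := by
    rintro ⟨_, x, rfl⟩
    exact ⟨x, rfl⟩
  have : LieAlgebra.IsSolvable g :=
    hsolv.isSolvable_of_surjective hφ fun x y => Subtype.ext (leftMul_bracket leib x y)
  obtain ⟨F, hmono, hbot, htop, hrank⟩ := LieModule.exists_lieSubmodule_flag (L := g) n hn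
  refine ⟨fun i => (F i).toSubmodule, fun _ _ hij => hmono hij, by simp [hbot],
    by simp [htop], hrank, fun i x v hv => (F i).lie_mem (x := φ x) hv⟩
end
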